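/- If f ≤ g holds Ī-almost everywhere on 𝒮 (f, g : 𝒮 → [-∞,∞]), then σ̄_j f ≤ σ̄_j g holds Ī-almost everywhere, for every j ≥ 0. -/

import Mathlib

open Filter Set
open scoped Classical ENNReal

noncomputable section

abbrev Traj := ℕ → ℝ

/-- Portfolio value `Π^{V,H}_{j,n}`. -/
def PiVal (j n : ℕ) (V : ℝ) (H : ℕ → Traj → ℝ) (y : Traj) : ℝ :=
  V + ∑ i ∈ Finset.Ico j n, H i y * (y (i + 1) - y i)

/-- Non-anticipativity of a sequence of functions on a set of trajectories. -/
def NonAnticipOn (A : Set Traj) (H : ℕ → Traj → ℝ) : Prop :=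
  ∀ i, ∀ x ∈ A, ∀ y ∈ A, (∀ k ≤ i, x k = y k) → H i x = H i y

/-- Non-anticipativity (at time `j`) of a single extended-real-valued function. -/
def NonAnticipF (A : Set Traj) (j : ℕ) (g : Traj → EReal) : Prop :=
  ∀ x ∈ A, ∀ y ∈ A, (∀ k ≤ j, x k = y k) → g x = g y

/-- Conditional space `𝒮_{(x,j)}`. -/
def Cond (𝒮 : Set Traj) (x : Traj) (j : ℕ) : Set Traj :=
  {y ∈ 𝒮 | ∀ i ≤ j, y i = x i}

/-- `liminf_{n→∞} Π^{V,H}_{j,n}` as a value in `[0,∞]`. -/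
def limInfVal (j : ℕ) (V : ℝ) (H : ℕ → Traj → ℝ) (y : Traj) : ℝ≥0∞ :=
  Filter.liminf (fun n => ENNReal.ofReal (PiVal j n V H y)) Filter.atTop

/-- The conditional null operator `Ī_j` on a set `A` of trajectories. -/
def IUpOn (A : Set Traj) (j : ℕ) (f : Traj → ℝ≥0∞) : ℝ≥0∞ :=
  sInf { c | ∃ (V : ℕ → ℝ) (H : ℕ → ℕ → Traj → ℝ),
    (∀ m, NonAnticipOn A (H m)) ∧
    (∀ m n, ∀ y ∈ A, 0 ≤ PiVal j n (V m) (H m) y) ∧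
    (∀ y ∈ A, f y ≤ ∑' m, limInfVal j (V m) (H m) y) ∧
    c = ∑' m, ENNReal.ofReal (V m) }

/-- `Ī_j f (x)`, conditioned on the node `(x,j)`. -/
def IUp (𝒮 : Set Traj) (j : ℕ) (f : Traj → ℝ≥0∞) (x : Traj) : ℝ≥0∞ :=
  IUpOn (Cond 𝒮 x j) j f

/-- The conditional superhedging outer integral on a set `A`, starting at time `j`. -/
def sigmaUpOn (A : Set Traj) (j : ℕ) (f : Traj → EReal) : EReal :=
  sInf { c : EReal | ∃ (V0 : ℝ) (H0 : ℕ → Traj → ℝ) (n0 : ℕ) (V : ℕ → ℝ)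
      (H : ℕ → ℕ → Traj → ℝ),
    NonAnticipOn A H0 ∧ (∀ m, NonAnticipOn A (H m)) ∧
    (∀ m n, ∀ y ∈ A, 0 ≤ PiVal j n (V m) (H m) y) ∧
    (∀ y ∈ A, f y ≤ (PiVal j n0 V0 H0 y : EReal) +
      ((∑' m, limInfVal j (V m) (H m) y : ℝ≥0∞) : EReal)) ∧
    c = (V0 : EReal) + ((∑' m, ENNReal.ofReal (V m) : ℝ≥0∞) : EReal) }

/-- `σ̄_j f (x)`. -/
def sigmaUp (𝒮 : Set Traj) (j : ℕ) (f : Traj → EReal) (x : Traj) : EReal :=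
  sigmaUpOn (Cond 𝒮 x j) j f

/-- `σ̲_j f (x) = -σ̄_j (-f)(x)`. -/
def sigmaDown (𝒮 : Set Traj) (j : ℕ) (f : Traj → EReal) (x : Traj) : EReal :=
  - sigmaUp 𝒮 j (fun y => - f y) x

/-- A set is `Ī`-null. -/
def NullSet (𝒮 : Set Traj) (E : Set Traj) : Prop :=
  IUpOn 𝒮 0 (fun y => if y ∈ E then 1 else 0) = 0

/-- A property holds `Ī`-almost everywhere on `𝒮`. -/
def AEOn (𝒮 : Set Traj) (P : Traj → Prop) : Prop :=
  NullSet 𝒮 {y ∈ 𝒮 | ¬ P y}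

/-- Property `(L_{(x,j)})`, continuity from below at the node `(x,j)`. -/
def PropL (𝒮 : Set Traj) (x : Traj) (j : ℕ) : Prop :=
  ∀ (V0 : ℝ) (H0 : ℕ → Traj → ℝ) (n0 : ℕ) (V : ℕ → ℝ) (H : ℕ → ℕ → Traj → ℝ),
    NonAnticipOn (Cond 𝒮 x j) H0 → (∀ m, NonAnticipOn (Cond 𝒮 x j) (H m)) →
    (∀ m n, ∀ y ∈ Cond 𝒮 x j, 0 ≤ PiVal j n (V m) (H m) y) →
    (∀ y ∈ Cond 𝒮 x j, (PiVal j n0 V0 H0 y : EReal) ≤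
      ((∑' m, limInfVal j (V m) (H m) y : ℝ≥0∞) : EReal)) →
    (V0 : EReal) ≤ ((∑' m, ENNReal.ofReal (V m) : ℝ≥0∞) : EReal)

/-- Assumption `(L)`-a.e. -/
def LaeAssumption (𝒮 : Set Traj) : Prop :=
  (∀ x ∈ 𝒮, PropL 𝒮 x 0) ∧ NullSet 𝒮 {x ∈ 𝒮 | ∃ j, ¬ PropL 𝒮 x j}

/-- Up-down node. -/
def UpDownNode (𝒮 : Set Traj) (x : Traj) (j : ℕ) : Prop :=
  (∃ y ∈ Cond 𝒮 x j, x j < y (j + 1)) ∧ (∃ y ∈ Cond 𝒮 x j, y (j + 1) < x j)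

/-- Flat node. -/
def FlatNode (𝒮 : Set Traj) (x : Traj) (j : ℕ) : Prop :=
  ∀ y ∈ Cond 𝒮 x j, y (j + 1) = x j

/-- Arbitrage node. -/
def ArbitrageNode (𝒮 : Set Traj) (x : Traj) (j : ℕ) : Prop :=
  ¬ UpDownNode 𝒮 x j ∧ ¬ FlatNode 𝒮 x j

/-- Type II arbitrage node. -/
def TypeIINode (𝒮 : Set Traj) (x : Traj) (j : ℕ) : Prop :=
  ArbitrageNode 𝒮 x j ∧ ¬ ∃ y ∈ Cond 𝒮 x j, y (j + 1) = x j

/-- Trajectory based stopping time. -/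
def StoppingTime (𝒮 : Set Traj) (τ : Traj → ℕ∞) : Prop :=
  ∀ x ∈ 𝒮, ∀ y ∈ 𝒮, (∀ k : ℕ, (k : ℕ∞) ≤ τ x → x k = y k) → τ x = τ y

/-- `⊤`-dominant addition on `EReal`, implementing the convention `∞ + (−∞) = ∞`. -/
def eadd (a b : EReal) : EReal := if a = ⊤ ∨ b = ⊤ then ⊤ else a + b

/-- Subtraction `u − v = u + (−v)` with the convention `∞ + (−∞) = ∞`. -/
def esub (a b : EReal) : EReal := eadd a (-b)

/-- Supermartingale. -/
def TrajSupermartingale (𝒮 : Set Traj) (f : ℕ → Traj → EReal) : Prop :=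
  (∀ j, NonAnticipF 𝒮 j (f j)) ∧
  ∀ j, AEOn 𝒮 (fun x => sigmaUp 𝒮 j (f (j + 1)) x ≤ f j x)

/-!
Let `E` be the null set where `f > g`. By countable subadditivity `∞ · 1_E` is null as well, so
for every `ε > 0` there are nonnegative portfolios of total initial capital at most `ε` whose
liminfs sum to `∞` on `E`. At a node `(x, j)` where their total capital at time `j` is finite,
restarting them there, scaled by a small `t > 0`, and adding them to any superhedge of `g` gives a
superhedge of `f` at arbitrarily small extra cost, hence `σ̄_j f (x) ≤ σ̄_j g (x)`. The nodes where
that capital is infinite are covered by the same portfolios stopped at time `j`, so `Ī_0` of their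
indicator is at most `ε`.
-/

def NonnegPortfolios (A : Set Traj) (j : ℕ) {ι : Type*} (V : ι → ℝ) (H : ι → ℕ → Traj → ℝ) :
    Prop :=
  (∀ m, NonAnticipOn A (H m)) ∧ ∀ m n, ∀ y ∈ A, 0 ≤ PiVal j n (V m) (H m) y

def stopAt (j : ℕ) (H : ℕ → Traj → ℝ) : ℕ → Traj → ℝ :=
  fun i z => if i < j then H i z else 0

section PiVal

variable {V : ℝ} {H : ℕ → Traj → ℝ} {y : Traj}

lemma PiVal_of_le {j n : ℕ} (h : n ≤ j) : PiVal j n V H y = V := by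
  simp [PiVal, Finset.Ico_eq_empty_of_le h]

lemma PiVal_mul (t : ℝ) (j n : ℕ) :
    PiVal j n (t * V) (fun i z => t * H i z) y = t * PiVal j n V H y := by
  simp only [PiVal, mul_add, Finset.mul_sum, mul_assoc]

lemma PiVal_restart {A : Set Traj} (hH : NonAnticipOn A H) {x : Traj} (hx : x ∈ A)
    {i j n : ℕ} (hy : y ∈ Cond A x j) (hij : i ≤ j) (hjn : j ≤ n) :
    PiVal j n (PiVal i j V H x) H y = PiVal i n V H y := by
  have hpast : ∀ k ∈ Finset.Ico i j,
      H k x * (x (k + 1) - x k) = H k y * (y (k + 1) - y k) := by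
    intro k hk
    have hkj := (Finset.mem_Ico.1 hk).2
    rw [hH k x hx y hy.1 fun l hl => (hy.2 l (by omega)).symm, hy.2 (k + 1) hkj, hy.2 k hkj.le]
  rw [PiVal, PiVal, PiVal, Finset.sum_congr rfl hpast, add_assoc,
    Finset.sum_Ico_consecutive _ hij hjn]

lemma PiVal_stopAt (i j n : ℕ) : PiVal i n V (stopAt j H) y = PiVal i (min n j) V H y := by
  rw [PiVal, PiVal]
  congr 1
  refine (Finset.sum_subset_zero_on_sdiff (Finset.Ico_subset_Ico_right (min_le_left n j))
    (fun k hk => ?_) fun k hk => ?_).symm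
  · obtain ⟨hk, hk'⟩ := Finset.mem_sdiff.1 hk
    have : ¬ k < j := fun hkj => hk' (Finset.mem_Ico.2 ⟨(Finset.mem_Ico.1 hk).1,
      lt_min (Finset.mem_Ico.1 hk).2 hkj⟩)
    rw [stopAt, if_neg this, zero_mul]
  · rw [stopAt, if_pos (lt_min_iff.1 (Finset.mem_Ico.1 hk).2).2]

end PiVal

section limInfVal

variable {V : ℝ} {H : ℕ → Traj → ℝ} {y : Traj}

lemma limInfVal_restart {A : Set Traj} (hH : NonAnticipOn A H) {x : Traj} (hx : x ∈ A)
    {i j : ℕ} (hy : y ∈ Cond A x j) (hij : i ≤ j) :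
    limInfVal j (PiVal i j V H x) H y = limInfVal i V H y := by
  refine liminf_congr ?_
  filter_upwards [eventually_ge_atTop j] with n hn
  rw [PiVal_restart hH hx hy hij hn]

lemma ofReal_mul_limInfVal_le {t : ℝ} (ht : 0 ≤ t) (j : ℕ) :
    ENNReal.ofReal t * limInfVal j V H y ≤ limInfVal j (t * V) (fun i z => t * H i z) y := by
  have hval : (fun n => ENNReal.ofReal (PiVal j n (t * V) (fun i z => t * H i z) y))
      = (fun _ => ENNReal.ofReal t) * fun n => ENNReal.ofReal (PiVal j n V H y) := by
    funext n
    simp [PiVal_mul, ENNReal.ofReal_mul ht]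
  rw [limInfVal, limInfVal, hval]
  calc ENNReal.ofReal t * liminf (fun n => ENNReal.ofReal (PiVal j n V H y)) atTop
      = liminf (fun _ : ℕ => ENNReal.ofReal t) atTop *
          liminf (fun n => ENNReal.ofReal (PiVal j n V H y)) atTop := by rw [liminf_const]
    _ ≤ _ := ENNReal.le_liminf_mul

lemma limInfVal_stopAt (i j : ℕ) :
    limInfVal i V (stopAt j H) y = ENNReal.ofReal (PiVal i j V H y) := by
  rw [limInfVal, ← liminf_const (f := (atTop : Filter ℕ)) (ENNReal.ofReal (PiVal i j V H y))]
  refine liminf_congr ?_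
  filter_upwards [eventually_ge_atTop j] with n hn
  rw [PiVal_stopAt, min_eq_right hn]

end limInfVal

namespace NonnegPortfolios

variable {A : Set Traj} {j : ℕ} {ι κ : Type*}

lemma comp {V : ι → ℝ} {H : ι → ℕ → Traj → ℝ} (hP : NonnegPortfolios A j V H) (e : κ → ι) :
    NonnegPortfolios A j (V ∘ e) (H ∘ e) :=
  ⟨fun m => hP.1 (e m), fun m => hP.2 (e m)⟩

lemma sumElim {V₁ : ι → ℝ} {H₁ : ι → ℕ → Traj → ℝ} {V₂ : κ → ℝ} {H₂ : κ → ℕ → Traj → ℝ}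
    (hP₁ : NonnegPortfolios A j V₁ H₁) (hP₂ : NonnegPortfolios A j V₂ H₂) :
    NonnegPortfolios A j (Sum.elim V₁ V₂) (Sum.elim H₁ H₂) :=
  ⟨fun m => m.rec hP₁.1 hP₂.1, fun m => m.rec hP₁.2 hP₂.2⟩

lemma uncurry {V : κ → ι → ℝ} {H : κ → ι → ℕ → Traj → ℝ}
    (hP : ∀ k, NonnegPortfolios A j (V k) (H k)) :
    NonnegPortfolios A j (fun p : κ × ι => V p.1 p.2) (fun p => H p.1 p.2) :=
  ⟨fun p => (hP p.1).1 p.2, fun p => (hP p.1).2 p.2⟩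

lemma stopAt {i : ℕ} {V : ι → ℝ} {H : ι → ℕ → Traj → ℝ} (hP : NonnegPortfolios A i V H)
    (j : ℕ) : NonnegPortfolios A i V (fun m => _root_.stopAt j (H m)) := by
  refine ⟨fun m k x hx y hy hxy => ?_, fun m n y hy => ?_⟩
  · simp only [_root_.stopAt, hP.1 m k x hx y hy hxy]
  · rw [PiVal_stopAt]
    exact hP.2 m _ y hy

lemma restart {i : ℕ} {V : ι → ℝ} {H : ι → ℕ → Traj → ℝ} (hP : NonnegPortfolios A i V H)
    (hij : i ≤ j) {x : Traj} (hx : x ∈ A) {t : ℝ} (ht : 0 ≤ t) :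
    NonnegPortfolios (Cond A x j) j (fun m => t * PiVal i j (V m) (H m) x)
      (fun m k z => t * H m k z) := by
  refine ⟨fun m k y hy z hz hyz => ?_, fun m n y hy => ?_⟩
  · simp only [hP.1 m k y hy.1 z hz.1 hyz]
  · rw [PiVal_mul]
    refine mul_nonneg ht ?_
    rcases le_total n j with hnj | hjn
    · rw [PiVal_of_le hnj]
      exact hP.2 m j x hx
    · rw [PiVal_restart (hP.1 m) hx hy hij hjn]
      exact hP.2 m n y hy.1

end NonnegPortfolios

section IUpOn

variable {A : Set Traj} {j : ℕ}

lemma IUpOn_le_of_cover {ι : Type*} [Denumerable ι] {f : Traj → ℝ≥0∞} {V : ι → ℝ}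
    {H : ι → ℕ → Traj → ℝ} (hP : NonnegPortfolios A j V H)
    (hf : ∀ y ∈ A, f y ≤ ∑' m, limInfVal j (V m) (H m) y) :
    IUpOn A j f ≤ ∑' m, ENNReal.ofReal (V m) := by
  let e := (Denumerable.eqv ι).symm
  obtain ⟨hH, hV⟩ := hP.comp e
  exact sInf_le ⟨V ∘ e, H ∘ e, hH, hV,
    fun y hy => (hf y hy).trans_eq (e.tsum_eq fun m => limInfVal j (V m) (H m) y).symm,
    (e.tsum_eq fun m => ENNReal.ofReal (V m)).symm⟩

lemma exists_cover_of_IUpOn_lt {f : Traj → ℝ≥0∞} {c : ℝ≥0∞} (h : IUpOn A j f < c) :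
    ∃ (V : ℕ → ℝ) (H : ℕ → ℕ → Traj → ℝ), NonnegPortfolios A j V H ∧
      (∀ y ∈ A, f y ≤ ∑' m, limInfVal j (V m) (H m) y) ∧ ∑' m, ENNReal.ofReal (V m) < c := by
  obtain ⟨_, ⟨V, H, hH, hV, hf, rfl⟩, hc⟩ := sInf_lt_iff.1 h
  exact ⟨V, H, ⟨hH, hV⟩, hf, hc⟩

lemma IUpOn_mono {f g : Traj → ℝ≥0∞} (h : ∀ y ∈ A, f y ≤ g y) : IUpOn A j f ≤ IUpOn A j g :=
  sInf_le_sInf fun _ ⟨V, H, hH, hV, hg, hc⟩ =>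
    ⟨V, H, hH, hV, fun y hy => (h y hy).trans (hg y hy), hc⟩

lemma IUpOn_tsum_le (f : ℕ → Traj → ℝ≥0∞) :
    IUpOn A j (fun y => ∑' k, f k y) ≤ ∑' k, IUpOn A j (f k) := by
  refine ENNReal.le_of_forall_pos_le_add fun ε hε hfin => ?_
  obtain ⟨δ, hδ, hδε⟩ := ENNReal.exists_pos_sum_of_countable (ENNReal.coe_pos.2 hε).ne' ℕ
  have hlt : ∀ k, IUpOn A j (f k) < IUpOn A j (f k) + δ k := fun k =>
    ENNReal.lt_add_right (ne_top_of_le_ne_top hfin.ne (ENNReal.le_tsum k))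
      (ENNReal.coe_ne_zero.2 (hδ k).ne')
  choose V H hP hcov hcost using fun k => exists_cover_of_IUpOn_lt (hlt k)
  calc IUpOn A j (fun y => ∑' k, f k y)
      ≤ ∑' p : ℕ × ℕ, ENNReal.ofReal (V p.1 p.2) :=
        IUpOn_le_of_cover (NonnegPortfolios.uncurry hP) fun y hy =>
          (ENNReal.tsum_le_tsum fun k => hcov k y hy).trans_eq
            (ENNReal.tsum_prod (f := fun k m => limInfVal j (V k m) (H k m) y)).symm
    _ = ∑' k, ∑' m, ENNReal.ofReal (V k m) :=
        ENNReal.tsum_prod (f := fun k m => ENNReal.ofReal (V k m))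
    _ ≤ ∑' k, (IUpOn A j (f k) + δ k) := ENNReal.tsum_le_tsum fun k => (hcost k).le
    _ ≤ ∑' k, IUpOn A j (f k) + ε := by
        rw [ENNReal.tsum_add]
        exact add_le_add_right hδε.le _

lemma IUpOn_ite_top_eq_zero {E : Set Traj} (h : IUpOn A j (fun y => if y ∈ E then 1 else 0) = 0) :
    IUpOn A j (fun y => if y ∈ E then ⊤ else 0) = 0 := by
  have htop : (fun y => if y ∈ E then ⊤ else 0)
      = fun y => ∑' _ : ℕ, (if y ∈ E then 1 else 0 : ℝ≥0∞) := by
    funext y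
    split_ifs
    · exact (ENNReal.tsum_const_eq_top_of_ne_zero one_ne_zero).symm
    · exact tsum_zero.symm
  rw [htop, ← nonpos_iff_eq_zero]
  exact (IUpOn_tsum_le _).trans_eq (by simp [h])

lemma IUpOn_tsum_PiVal_le {i : ℕ} {V : ℕ → ℝ} {H : ℕ → ℕ → Traj → ℝ}
    (hP : NonnegPortfolios A i V H) (j : ℕ) :
    IUpOn A i (fun x => ∑' m, ENNReal.ofReal (PiVal i j (V m) (H m) x))
      ≤ ∑' m, ENNReal.ofReal (V m) :=
  IUpOn_le_of_cover (hP.stopAt j) fun y _ => by simp only [limInfVal_stopAt, le_refl]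

end IUpOn

lemma EReal.le_of_forall_pos_le_add {a b : EReal} (h : ∀ δ : ℝ, 0 < δ → a ≤ b + δ) : a ≤ b := by
  refine EReal.le_of_forall_lt_iff_le.1 fun z hz => ?_
  induction b using EReal.rec with
  | bot => exact ((h 1 one_pos).trans_eq (EReal.bot_add _)).trans bot_le
  | coe r =>
    have hrz : r < z := EReal.coe_lt_coe_iff.1 hz
    have hle := h (z - r) (by linarith)
    rwa [← EReal.coe_add, add_sub_cancel] at hle
  | top => exact absurd hz not_top_lt

section sigmaUpOn

variable {A : Set Traj} {j : ℕ} {f g : Traj → EReal}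

lemma sigmaUpOn_le_of_cover {ι : Type*} [Denumerable ι] {n₀ : ℕ} {V₀ : ℝ} {H₀ : ℕ → Traj → ℝ}
    {V : ι → ℝ} {H : ι → ℕ → Traj → ℝ} (hH₀ : NonAnticipOn A H₀) (hP : NonnegPortfolios A j V H)
    (hf : ∀ y ∈ A, f y ≤ PiVal j n₀ V₀ H₀ y + ((∑' m, limInfVal j (V m) (H m) y : ℝ≥0∞) : EReal)) :
    sigmaUpOn A j f ≤ V₀ + ((∑' m, ENNReal.ofReal (V m) : ℝ≥0∞) : EReal) := by
  let e := (Denumerable.eqv ι).symm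
  obtain ⟨hH, hV⟩ := hP.comp e
  exact sInf_le ⟨V₀, H₀, n₀, V ∘ e, H ∘ e, hH₀, hH, hV,
    fun y hy => (hf y hy).trans_eq (by rw [← e.tsum_eq fun m => limInfVal j (V m) (H m) y]; rfl),
    by rw [← e.tsum_eq fun m => ENNReal.ofReal (V m)]; rfl⟩

-- The hypothesis `hfg` says `f ≤ g + ∞ · 1_E`; it is a disjunction because `⊥ + ⊤ = ⊥` in `EReal`.
lemma sigmaUpOn_le_add {W : ℕ → ℝ} {K : ℕ → ℕ → Traj → ℝ} (hP : NonnegPortfolios A j W K)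
    (hfg : ∀ y ∈ A, f y ≤ g y ∨ ∑' m, limInfVal j (W m) (K m) y = ⊤)
    (hW : ∑' m, ENNReal.ofReal (W m) ≠ ⊤) :
    sigmaUpOn A j f ≤ sigmaUpOn A j g + ((∑' m, ENNReal.ofReal (W m) : ℝ≥0∞) : EReal) := by
  set r := (∑' m, ENNReal.ofReal (W m)).toReal
  rw [← EReal.coe_ennreal_toReal hW]
  refine (EReal.sub_add_cancel (a := sigmaUpOn A j f) (b := r)).symm.le.trans
    (add_le_add (le_sInf ?_) le_rfl)
  rintro _ ⟨V₀, H₀, n₀, V, H, hH₀, hH, hV, hg, rfl⟩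
  have hsplit : ∀ F : ℝ → (ℕ → Traj → ℝ) → ℝ≥0∞,
      ∑' s, F (Sum.elim V W s) (Sum.elim H K s) = ∑' m, F (V m) (H m) + ∑' m, F (W m) (K m) :=
    fun F => Summable.tsum_sum ENNReal.summable ENNReal.summable
  have hcover : sigmaUpOn A j f ≤ V₀ + ((∑' m, ENNReal.ofReal (V m) : ℝ≥0∞) : EReal) + r := by
    calc sigmaUpOn A j f
        ≤ V₀ + ((∑' s, ENNReal.ofReal (Sum.elim V W s) : ℝ≥0∞) : EReal) := by
          refine sigmaUpOn_le_of_cover (n₀ := n₀) hH₀ (NonnegPortfolios.sumElim ⟨hH, hV⟩ hP)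
            fun y hy => ?_
          rw [hsplit fun v h => limInfVal j v h y, EReal.coe_ennreal_add]
          rcases hfg y hy with hfg | htop
          · refine hfg.trans ((hg y hy).trans ?_)
            gcongr
            exact le_add_of_nonneg_right (EReal.coe_ennreal_nonneg _)
          · rw [htop, EReal.coe_ennreal_top, EReal.add_top_of_ne_bot (EReal.coe_ennreal_ne_bot _),
              EReal.add_top_of_ne_bot (EReal.coe_ne_bot _)]
            exact le_top
      _ = _ := by
          rw [hsplit fun v _ => ENNReal.ofReal v, EReal.coe_ennreal_add, ← add_assoc,
            EReal.coe_ennreal_toReal hW]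
  calc sigmaUpOn A j f - r ≤ V₀ + ((∑' m, ENNReal.ofReal (V m) : ℝ≥0∞) : EReal) + r - r :=
        EReal.sub_le_sub hcover le_rfl
    _ = _ := EReal.add_sub_cancel_right

end sigmaUpOn

lemma sigmaUp_le_of_tsum_PiVal_ne_top {𝒮 : Set Traj} {i j : ℕ} {f g : Traj → EReal}
    {V : ℕ → ℝ} {H : ℕ → ℕ → Traj → ℝ} (hP : NonnegPortfolios 𝒮 i V H) (hij : i ≤ j)
    (hfg : ∀ y ∈ 𝒮, f y ≤ g y ∨ ∑' m, limInfVal i (V m) (H m) y = ⊤) {x : Traj} (hx : x ∈ 𝒮)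
    (hx_fin : ∑' m, ENNReal.ofReal (PiVal i j (V m) (H m) x) ≠ ⊤) :
    sigmaUp 𝒮 j f x ≤ sigmaUp 𝒮 j g x := by
  refine EReal.le_of_forall_pos_le_add fun δ hδ => ?_
  obtain ⟨t, ht, htδ⟩ := ENNReal.exists_nnreal_pos_mul_lt hx_fin (ENNReal.ofReal_pos.2 hδ).ne'
  have hcost : ∑' m, ENNReal.ofReal (t * PiVal i j (V m) (H m) x)
      = t * ∑' m, ENNReal.ofReal (PiVal i j (V m) (H m) x) := by
    simp only [ENNReal.ofReal_mul t.coe_nonneg, ENNReal.ofReal_coe_nnreal, ENNReal.tsum_mul_left]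
  have hcov : ∀ y ∈ Cond 𝒮 x j, f y ≤ g y ∨
      ∑' m, limInfVal j (t * PiVal i j (V m) (H m) x) (fun k z => t * H m k z) y = ⊤ := by
    intro y hy
    refine (hfg y hy.1).imp_right fun htop => top_le_iff.1 ?_
    calc ⊤ = ENNReal.ofReal t * ∑' m, limInfVal i (V m) (H m) y := by
          rw [htop, ENNReal.mul_top (by simpa using ht.ne')]
      _ = ∑' m, ENNReal.ofReal t * limInfVal j (PiVal i j (V m) (H m) x) (H m) y := by
          simp only [ENNReal.tsum_mul_left, limInfVal_restart (hP.1 _) hx hy hij]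
      _ ≤ _ := ENNReal.tsum_le_tsum fun m => ofReal_mul_limInfVal_le t.coe_nonneg j
  calc sigmaUp 𝒮 j f x
      ≤ sigmaUp 𝒮 j g x + ((∑' m, ENNReal.ofReal (t * PiVal i j (V m) (H m) x) : ℝ≥0∞) : EReal) :=
        sigmaUpOn_le_add (hP.restart hij hx t.coe_nonneg) hcov (hcost ▸ htδ.ne_top)
    _ ≤ sigmaUp 𝒮 j g x + δ := by
        gcongr
        rw [hcost, ← max_eq_left hδ.le, ← EReal.coe_ennreal_ofReal]
        exact EReal.coe_ennreal_le_coe_ennreal_iff.2 htδ.le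

/-- a.e. monotonicity of the conditional outer integral. -/
theorem sigmaUp_mono_ae (𝒮 : Set Traj) (f g : Traj → EReal)
    (h : AEOn 𝒮 (fun y => f y ≤ g y)) (j : ℕ) :
    AEOn 𝒮 (fun x => sigmaUp 𝒮 j f x ≤ sigmaUp 𝒮 j g x) := by
  have hE := IUpOn_ite_top_eq_zero h
  refine nonpos_iff_eq_zero.1 (ENNReal.le_of_forall_pos_le_add fun ε hε _ => ?_)
  obtain ⟨V, H, hP, hcov, hcost⟩ :=
    exists_cover_of_IUpOn_lt (hE.trans_lt (ENNReal.coe_pos.2 hε))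
  have hfg : ∀ y ∈ 𝒮, f y ≤ g y ∨ ∑' m, limInfVal 0 (V m) (H m) y = ⊤ := fun y hy =>
    or_iff_not_imp_left.2 fun hy' => top_le_iff.1
      ((if_pos (show y ∈ {y ∈ 𝒮 | ¬ f y ≤ g y} from ⟨hy, hy'⟩)).symm.le.trans (hcov y hy))
  calc IUpOn 𝒮 0 _
      ≤ IUpOn 𝒮 0 (fun x => ∑' m, ENNReal.ofReal (PiVal 0 j (V m) (H m) x)) := by
        refine IUpOn_mono fun x hx => ?_
        split_ifs with hxF
        · have hinf : ∑' m, ENNReal.ofReal (PiVal 0 j (V m) (H m) x) = ⊤ := by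
            by_contra hfin
            exact hxF.2 (sigmaUp_le_of_tsum_PiVal_ne_top hP j.zero_le hfg hx hfin)
          exact hinf ▸ le_top
        · exact zero_le
    _ ≤ 0 + ε := by
        rw [zero_add]
        exact (IUpOn_tsum_PiVal_le hP j).trans hcost.le

end
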